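/- arXiv:math/0406548 — 2 statements merged into one kernel-verified Lean document; each statement's English description precedes it below -/
import Mathlib

section
/- If n = 2q and R is an algebraic curvature tensor on an n-dimensional oriented inner product space, then h_{2q}·g - (1/(2q-1)!)·c^{2q-1}(R^q) = 0; that is, the Einstein–Lovelock tensor T_n vanishes identically. -/
open scoped BigOperators
open scoped Classical

noncomputable section

/-- A `(p,q)`-double form on `ℝⁿ`, given by its components with respect to the
standard orthonormal basis: a scalar-valued function of a row multi-index and a
column multi-index. -/
def DForm (n p q : ℕ) : Type := (Fin p → Fin n) → (Fin q → Fin n) → ℝ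

namespace DForm

variable {n : ℕ}

/-- Transport a double form along equalities of the bidegrees. -/
def cast' {p q p' q' : ℕ} (hp : p = p') (hq : q = q') (ω : DForm n p q) :
    DForm n p' q' :=
  fun I J => ω (fun a => I (Fin.cast hp a)) (fun b => J (Fin.cast hq b))

/-- A double form is alternating in each of its two blocks of arguments. -/
def IsAlt {p q : ℕ} (ω : DForm n p q) : Prop :=
  (∀ (σ : Equiv.Perm (Fin p)) (I : Fin p → Fin n) (J : Fin q → Fin n),
      ω (I ∘ σ) J = ((Equiv.Perm.sign σ : ℤ) : ℝ) * ω I J) ∧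
  (∀ (τ : Equiv.Perm (Fin q)) (I : Fin p → Fin n) (J : Fin q → Fin n),
      ω I (J ∘ τ) = ((Equiv.Perm.sign τ : ℤ) : ℝ) * ω I J) ∧
  (∀ (I : Fin p → Fin n) (J : Fin q → Fin n),
      (¬ Function.Injective I ∨ ¬ Function.Injective J) → ω I J = 0)

/-- A `(p,p)`-double form is symmetric. -/
def IsSym {p : ℕ} (ω : DForm n p p) : Prop := ∀ I J, ω I J = ω J I

/-- The exterior (Kulkarni–Nomizu type) product of double forms:
`(α₁⊗β₁)·(α₂⊗β₂) = (α₁∧α₂)⊗(β₁∧β₂)` in components. -/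
def mul {p q r s : ℕ} (ω : DForm n p q) (θ : DForm n r s) :
    DForm n (p + r) (q + s) :=
  fun I J =>
    (((p.factorial * r.factorial * q.factorial * s.factorial : ℕ) : ℝ))⁻¹ *
      ∑ σ : Equiv.Perm (Fin (p + r)), ∑ τ : Equiv.Perm (Fin (q + s)),
        ((Equiv.Perm.sign σ : ℤ) : ℝ) * ((Equiv.Perm.sign τ : ℤ) : ℝ) *
          ω (fun a => I (σ (Fin.castAdd r a))) (fun b => J (τ (Fin.castAdd s b))) *
          θ (fun a => I (σ (Fin.natAdd p a))) (fun b => J (τ (Fin.natAdd q b)))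

/-- The contraction map `c : D^{p+1,q+1} → D^{p,q}` (trace over the orthonormal
basis in the first slot of each block). -/
def contr {p q : ℕ} (ω : DForm n (p + 1) (q + 1)) : DForm n p q :=
  fun I J => ∑ i : Fin n, ω (Fin.cons i I) (Fin.cons i J)

/-- Total version of the contraction (zero when a bidegree is `0`). -/
def contr' : {p q : ℕ} → DForm n p q → DForm n (p - 1) (q - 1)
  | _ + 1, _ + 1, ω => contr ω
  | 0, _, _ => fun _ _ => 0
  | _ + 1, 0, _ => fun _ _ => 0

/-- Iterated contraction `c^k : D^{p+k,q+k} → D^{p,q}`. -/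
def cIter {p q : ℕ} : (k : ℕ) → DForm n (p + k) (q + k) → DForm n p q
  | 0, ω => ω
  | k + 1, ω => cIter k (contr ω)

/-- The full contraction `c^p` of a `(p,p)`-double form, a scalar. -/
def fullc {p : ℕ} (ω : DForm n p p) : ℝ :=
  cIter (p := 0) (q := 0) p
    (cast' (Nat.zero_add p).symm (Nat.zero_add p).symm ω) Fin.elim0 Fin.elim0

/-- The metric of `ℝⁿ` as a `(1,1)`-double form. -/
def gd : DForm n 1 1 := fun I J => if I 0 = J 0 then 1 else 0

/-- Powers `g^p` of the metric in the ring of double forms. -/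
def gpow : (p : ℕ) → DForm n p p
  | 0 => fun _ _ => 1
  | p + 1 => mul (gpow p) gd

/-- Powers `ω^k` of a `(p,p)`-double form in the ring of double forms. -/
def pow {p : ℕ} (ω : DForm n p p) : (k : ℕ) → DForm n (p * k) (p * k)
  | 0 => fun _ _ => 1
  | k + 1 => mul (pow ω k) ω

/-- The natural pointwise inner product on `(p,q)`-double forms. -/
def innerPQ {p q : ℕ} (ω θ : DForm n p q) : ℝ :=
  (((p.factorial * q.factorial : ℕ) : ℝ))⁻¹ *
    ∑ I : Fin p → Fin n, ∑ J : Fin q → Fin n, ω I J * θ I J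

/-- The sign of the permutation of `{1,…,n}` obtained by concatenating the
multi-indices `K` and `I` (zero if it is not a permutation). -/
def epsSign {p : ℕ} (hp : p ≤ n) (K : Fin p → Fin n) (I : Fin (n - p) → Fin n) : ℝ :=
  if h : Function.Bijective
      (fun a : Fin n => Fin.append K I (Fin.cast (by omega) a)) then
    ((Equiv.Perm.sign (Equiv.ofBijective _ h) : ℤ) : ℝ)
  else 0

/-- The generalized Hodge star operator on double forms, acting as the usual
Hodge star on each factor. -/
def hstar {p q : ℕ} (hp : p ≤ n) (hq : q ≤ n) (ω : DForm n p q) :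
    DForm n (n - p) (n - q) :=
  fun I J =>
    (((p.factorial * q.factorial : ℕ) : ℝ))⁻¹ *
      ∑ K : Fin p → Fin n, ∑ L : Fin q → Fin n,
        epsSign hp K I * epsSign hq L J * ω K L

/-- The operator `F_h` associated with a symmetric bilinear form `h`:
in an orthonormal basis diagonalizing `h` it multiplies the `(I,J)` component by
the sum of the eigenvalues of `h` over the indices in `I` and `J`.
Coordinate-free version: insert the endomorphism of `h` in each slot. -/
def Fh {p q : ℕ} (h : Fin n → Fin n → ℝ) (ω : DForm n p q) : DForm n p q :=
  fun I J =>
    (∑ k : Fin p, ∑ i : Fin n, h (I k) i * ω (Function.update I k i) J) +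
    (∑ k : Fin q, ∑ i : Fin n, h (J k) i * ω I (Function.update J k i))

/-- A bilinear form on `ℝⁿ` viewed as a `(1,1)`-double form. -/
def ofBilin (h : Fin n → Fin n → ℝ) : DForm n 1 1 := fun I J => h (I 0) (J 0)

/-- The first Bianchi identity for a `(2,2)`-double form. -/
def Bianchi1 (R : DForm n 2 2) : Prop :=
  ∀ x y z u : Fin n,
    R ![x, y] ![z, u] + R ![y, z] ![x, u] + R ![z, x] ![y, u] = 0

end DForm

end


section LovelockAux

open Equiv

private lemma signsq (u : ℤˣ) : ((u : ℤ) : ℝ) * ((u : ℤ) : ℝ) = 1 := by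
  rcases Int.units_eq_one_or u with h | h <;> simp [h]

private lemma mul_alt_left {n p q r s : ℕ} (α : DForm n p q) (β : DForm n r s)
    (ρ : Equiv.Perm (Fin (p + r))) (I : Fin (p + r) → Fin n) (J : Fin (q + s) → Fin n) :
    DForm.mul α β (fun x => I (ρ x)) J
      = ((Equiv.Perm.sign ρ : ℤ) : ℝ) * DForm.mul α β I J := by
  unfold DForm.mul
  have key : (∑ σ : Equiv.Perm (Fin (p + r)), ∑ τ : Equiv.Perm (Fin (q + s)),
      ((Equiv.Perm.sign σ : ℤ) : ℝ) * ((Equiv.Perm.sign τ : ℤ) : ℝ) *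
        α (fun a => I (ρ (σ (Fin.castAdd r a)))) (fun b => J (τ (Fin.castAdd s b))) *
        β (fun a => I (ρ (σ (Fin.natAdd p a)))) (fun b => J (τ (Fin.natAdd q b))))
      = ((Equiv.Perm.sign ρ : ℤ) : ℝ) *
        ∑ σ : Equiv.Perm (Fin (p + r)), ∑ τ : Equiv.Perm (Fin (q + s)),
          ((Equiv.Perm.sign σ : ℤ) : ℝ) * ((Equiv.Perm.sign τ : ℤ) : ℝ) *
            α (fun a => I (σ (Fin.castAdd r a))) (fun b => J (τ (Fin.castAdd s b))) *
            β (fun a => I (σ (Fin.natAdd p a))) (fun b => J (τ (Fin.natAdd q b))) := by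
    rw [Finset.mul_sum]
    apply Fintype.sum_equiv (Equiv.mulLeft ρ)
    intro σ
    rw [Finset.mul_sum]
    apply Finset.sum_congr rfl
    intro τ _
    have hσ : ((Equiv.Perm.sign σ : ℤ) : ℝ)
        = ((Equiv.Perm.sign ρ : ℤ) : ℝ) * ((Equiv.Perm.sign (ρ * σ) : ℤ) : ℝ) := by
      rw [Equiv.Perm.sign_mul]
      push_cast
      rw [← mul_assoc, signsq, one_mul]
    simp only [Equiv.coe_mulLeft, Equiv.Perm.mul_apply]
    rw [hσ]; ring
  rw [key]; ring

private lemma mul_alt_right {n p q r s : ℕ} (α : DForm n p q) (β : DForm n r s)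
    (ρ : Equiv.Perm (Fin (q + s))) (I : Fin (p + r) → Fin n) (J : Fin (q + s) → Fin n) :
    DForm.mul α β I (fun x => J (ρ x))
      = ((Equiv.Perm.sign ρ : ℤ) : ℝ) * DForm.mul α β I J := by
  unfold DForm.mul
  have key : (∑ σ : Equiv.Perm (Fin (p + r)), ∑ τ : Equiv.Perm (Fin (q + s)),
      ((Equiv.Perm.sign σ : ℤ) : ℝ) * ((Equiv.Perm.sign τ : ℤ) : ℝ) *
        α (fun a => I (σ (Fin.castAdd r a))) (fun b => J (ρ (τ (Fin.castAdd s b)))) *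
        β (fun a => I (σ (Fin.natAdd p a))) (fun b => J (ρ (τ (Fin.natAdd q b)))))
      = ((Equiv.Perm.sign ρ : ℤ) : ℝ) *
        ∑ σ : Equiv.Perm (Fin (p + r)), ∑ τ : Equiv.Perm (Fin (q + s)),
          ((Equiv.Perm.sign σ : ℤ) : ℝ) * ((Equiv.Perm.sign τ : ℤ) : ℝ) *
            α (fun a => I (σ (Fin.castAdd r a))) (fun b => J (τ (Fin.castAdd s b))) *
            β (fun a => I (σ (Fin.natAdd p a))) (fun b => J (τ (Fin.natAdd q b))) := by
    rw [Finset.mul_sum]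
    apply Finset.sum_congr rfl
    intro σ _
    rw [Finset.mul_sum]
    apply Fintype.sum_equiv (Equiv.mulLeft ρ)
    intro τ
    have hτ : ((Equiv.Perm.sign τ : ℤ) : ℝ)
        = ((Equiv.Perm.sign ρ : ℤ) : ℝ) * ((Equiv.Perm.sign (ρ * τ) : ℤ) : ℝ) := by
      rw [Equiv.Perm.sign_mul]
      push_cast
      rw [← mul_assoc, signsq, one_mul]
    simp only [Equiv.coe_mulLeft, Equiv.Perm.mul_apply]
    rw [hτ]; ring
  rw [key]; ring

/-- Auxiliary: prepend a `k`-tuple of indices in front of a `p`-tuple. -/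
def extT {n p : ℕ} : {k : ℕ} → (Fin k → Fin n) → (Fin p → Fin n) → Fin (p + k) → Fin n
  | 0, _, I => I
  | _ + 1, K, I => Fin.cons (K 0) (extT (Fin.tail K) I)

lemma extT_val {n p : ℕ} : ∀ {k : ℕ} (K : Fin k → Fin n) (I : Fin p → Fin n)
    (j : Fin (p + k)),
    extT K I j = if h : (j : ℕ) < k then K ⟨j, h⟩
      else I ⟨(j : ℕ) - k, by have := j.isLt; omega⟩ := by
  intro k
  induction k with
  | zero =>
    intro K I j
    simp only [extT]
    rw [dif_neg (by omega)]
    exact congrArg I (Fin.ext (by simp))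
  | succ k ih =>
    intro K I j
    simp only [extT]
    refine Fin.cases ?_ ?_ j
    · rw [Fin.cons_zero, dif_pos (by simp)]
      exact congrArg K (Fin.ext (by simp))
    · intro i
      rw [Fin.cons_succ, ih]
      by_cases h : (i : ℕ) < k
      · rw [dif_pos h, dif_pos (by simp only [Fin.val_succ]; omega)]
        show K (Fin.succ ⟨i, h⟩) = _
        exact congrArg K (Fin.ext (by simp))
      · rw [dif_neg h, dif_neg (by simp only [Fin.val_succ]; omega)]
        exact congrArg I (Fin.ext (by simp only [Fin.val_succ]; omega))

lemma cIter_eq {n p q : ℕ} : ∀ (k : ℕ) (ω : DForm n (p + k) (q + k))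
    (I : Fin p → Fin n) (J : Fin q → Fin n),
    DForm.cIter k ω I J = ∑ K : Fin k → Fin n, ω (extT K I) (extT K J) := by
  intro k
  induction k with
  | zero =>
    intro ω I J
    simp only [DForm.cIter]
    rw [Fintype.sum_unique]
    rfl
  | succ k ih =>
    intro ω I J
    simp only [DForm.cIter]
    rw [ih]
    rw [← Equiv.sum_comp (Fin.consEquiv (fun _ : Fin (k + 1) => Fin n))
      (fun K => ω (extT K I) (extT K J)), Fintype.sum_prod_type, Finset.sum_comm]
    apply Finset.sum_congr rfl
    intro K' _
    simp only [DForm.contr]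
    apply Finset.sum_congr rfl
    intro i _
    have e : ∀ (p' : ℕ) (I' : Fin p' → Fin n),
        extT (Fin.cons i K' : Fin (k+1) → Fin n) I' = Fin.cons i (extT K' I') := by
      intro p' I'
      rw [extT.eq_2, Fin.cons_zero, Fin.tail_cons]
    have e2 : ((Fin.consEquiv fun _ : Fin (k+1) => Fin n) (i, K') : Fin (k+1) → Fin n)
        = Fin.cons i K' := rfl
    rw [e2, e p I, e q J]

end LovelockAux
/-- If `n = 2q`, then for any algebraic curvature tensor `R`,
`h_{2q}·g - (1/(2q-1)!)·c^{2q-1}(R^q) = 0`; i.e. the Einstein–Lovelock tensor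
`T_n` vanishes identically. -/
theorem lovelock_top_vanishes {n q : ℕ} (hq : 1 ≤ q) (hn : n = 2 * q)
    (R : DForm n 2 2) (h1 : DForm.IsAlt R) (h2 : DForm.IsSym R)
    (h3 : DForm.Bianchi1 R) :
    ∀ I J : Fin 1 → Fin n,
      (((2 * q).factorial : ℝ))⁻¹ * DForm.fullc (DForm.pow R q) *
          DForm.gd I J -
        (((2 * q - 1).factorial : ℝ))⁻¹ *
          DForm.cIter (p := 1) (q := 1) (2 * q - 1)
            (DForm.cast' (by omega) (by omega) (DForm.pow R q)) I J = 0 := by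
  subst hn
  obtain ⟨q', rfl⟩ : ∃ q', q = q' + 1 := ⟨q - 1, by omega⟩
  intro I J
  -- Basic permutation-invariance properties of `R^q` (valid for any double form).
  have P1 : ∀ (ρ : Equiv.Perm (Fin (2 * (q' + 1))))
      (A B : Fin (2 * (q' + 1)) → Fin (2 * (q' + 1))),
      DForm.pow R (q' + 1) (fun x => A (ρ x)) B
        = ((Equiv.Perm.sign ρ : ℤ) : ℝ) * DForm.pow R (q' + 1) A B := by
    intro ρ A B
    exact mul_alt_left (DForm.pow R q') R ρ A B
  have P2 : ∀ (ρ : Equiv.Perm (Fin (2 * (q' + 1))))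
      (A B : Fin (2 * (q' + 1)) → Fin (2 * (q' + 1))),
      DForm.pow R (q' + 1) A (fun x => B (ρ x))
        = ((Equiv.Perm.sign ρ : ℤ) : ℝ) * DForm.pow R (q' + 1) A B := by
    intro ρ A B
    exact mul_alt_right (DForm.pow R q') R ρ A B
  have P3a : ∀ (A B : Fin (2 * (q' + 1)) → Fin (2 * (q' + 1))),
      ¬ Function.Injective A → DForm.pow R (q' + 1) A B = 0 := by
    intro A B hA
    rw [Function.not_injective_iff] at hA
    obtain ⟨a, b, hab, hne⟩ := hA
    have hswap : (fun x => A (Equiv.swap a b x)) = A := by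
      funext x
      rcases eq_or_ne x a with rfl | hxa
      · rw [Equiv.swap_apply_left]; exact hab.symm
      · rcases eq_or_ne x b with rfl | hxb
        · rw [Equiv.swap_apply_right]; exact hab
        · rw [Equiv.swap_apply_of_ne_of_ne hxa hxb]
    have h := P1 (Equiv.swap a b) A B
    rw [hswap, Equiv.Perm.sign_swap hne] at h
    push_cast at h
    linarith
  have P3b : ∀ (A B : Fin (2 * (q' + 1)) → Fin (2 * (q' + 1))),
      ¬ Function.Injective B → DForm.pow R (q' + 1) A B = 0 := by
    intro A B hB
    rw [Function.not_injective_iff] at hB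
    obtain ⟨a, b, hab, hne⟩ := hB
    have hswap : (fun x => B (Equiv.swap a b x)) = B := by
      funext x
      rcases eq_or_ne x a with rfl | hxa
      · rw [Equiv.swap_apply_left]; exact hab.symm
      · rcases eq_or_ne x b with rfl | hxb
        · rw [Equiv.swap_apply_right]; exact hab
        · rw [Equiv.swap_apply_of_ne_of_ne hxa hxb]
    have h := P2 (Equiv.swap a b) A B
    rw [hswap, Equiv.Perm.sign_swap hne] at h
    push_cast at h
    linarith
  -- The diagonal values of `R^q` on a top multi-index.
  have T : ∀ F : Fin (2 * (q' + 1)) → Fin (2 * (q' + 1)),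
      DForm.pow R (q' + 1) F F =
        if Function.Injective F then
          DForm.pow R (q' + 1) (fun x => x) (fun x => x) else 0 := by
    intro F
    by_cases hF : Function.Injective F
    · rw [if_pos hF]
      have hb : Function.Bijective F := Finite.injective_iff_bijective.mp hF
      have h1 : DForm.pow R (q' + 1) F F
          = ((Equiv.Perm.sign (Equiv.ofBijective F hb) : ℤ) : ℝ) *
              DForm.pow R (q' + 1) (fun x => x) F :=
        P1 (Equiv.ofBijective F hb) (fun x => x) F
      have h2 : DForm.pow R (q' + 1) (fun x => x) F
          = ((Equiv.Perm.sign (Equiv.ofBijective F hb) : ℤ) : ℝ) *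
              DForm.pow R (q' + 1) (fun x => x) (fun x => x) :=
        P2 (Equiv.ofBijective F hb) (fun x => x) (fun x => x)
      rw [h1, h2, ← mul_assoc, signsq, one_mul]
    · rw [if_neg hF]
      exact P3a F F hF
  -- rewrite the two contraction expressions as sums
  simp only [DForm.fullc]
  rw [cIter_eq, cIter_eq]
  simp only [DForm.cast']
  -- first sum: over all top multi-indices
  have hfull : ∀ (pf : 2 * (q' + 1) = 0 + 2 * (q' + 1)),
      (∑ K : Fin (2 * (q' + 1)) → Fin (2 * (q' + 1)),
        DForm.pow R (q' + 1) (fun a => extT K Fin.elim0 (Fin.cast pf a))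
          (fun a => extT K Fin.elim0 (Fin.cast pf a)))
      = ∑ F : Fin (2 * (q' + 1)) → Fin (2 * (q' + 1)),
          (if Function.Injective F then DForm.pow R (q' + 1) (fun x => x) (fun x => x) else 0) := by
    intro pf
    apply Finset.sum_congr rfl
    intro K _
    have e1 : (fun a : Fin (2 * (q' + 1)) =>
        extT K (Fin.elim0 : Fin 0 → Fin (2 * (q' + 1))) (Fin.cast pf a)) = K := by
      funext a
      rw [extT_val, dif_pos (show ((Fin.cast pf a : Fin (0 + 2 * (q' + 1))) : ℕ) < 2 * (q' + 1) from by
        simpa using a.isLt)]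
      exact congrArg K (Fin.ext (by simp))
    rw [e1]
    exact T K
  rw [hfull]
  -- second sum: rewrite the argument functions in dite form
  have hw : ∀ (pf : 2 * (q' + 1) = 1 + (2 * (q' + 1) - 1))
      (K : Fin (2 * (q' + 1) - 1) → Fin (2 * (q' + 1))) (I' : Fin 1 → Fin (2 * (q' + 1))),
      (fun a : Fin (2 * (q' + 1)) => extT K I' (Fin.cast pf a))
        = fun a : Fin (2 * (q' + 1)) => if h : (a : ℕ) < (2 * (q' + 1) - 1) then K ⟨a, h⟩ else I' 0 := by
    intro pf K I'
    funext a
    rw [extT_val]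
    by_cases h : (a : ℕ) < (2 * (q' + 1) - 1)
    · rw [dif_pos (show ((Fin.cast pf a : Fin (1 + (2 * (q' + 1) - 1))) : ℕ) < (2 * (q' + 1) - 1) from by
        simpa using h), dif_pos h]
      exact congrArg K (Fin.ext (by simp))
    · rw [dif_neg (show ¬(((Fin.cast pf a : Fin (1 + (2 * (q' + 1) - 1))) : ℕ) < (2 * (q' + 1) - 1)) from by
        simpa using h), dif_neg h]
      exact congrArg I' (Subsingleton.elim _ _)
  simp only [hw]
  rcases eq_or_ne (I 0) (J 0) with hIJ | hIJ
  · -- the case `I 0 = J 0`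
    have hIJ' : I = J := funext fun x => by rw [Subsingleton.elim x 0]; exact hIJ
    subst hIJ'
    have hgd : DForm.gd I I = (1 : ℝ) := by simp [DForm.gd]
    rw [hgd]
    -- second sum in closed form
    have hsum2 : (∑ K : Fin (2 * (q' + 1) - 1) → Fin (2 * (q' + 1)),
        DForm.pow R (q' + 1) (fun a : Fin (2 * (q' + 1)) => if h : (a : ℕ) < (2 * (q' + 1) - 1) then K ⟨a, h⟩ else I 0) (fun a : Fin (2 * (q' + 1)) => if h : (a : ℕ) < (2 * (q' + 1) - 1) then K ⟨a, h⟩ else I 0))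
        = ∑ K : Fin (2 * (q' + 1) - 1) → Fin (2 * (q' + 1)),
            (if Function.Injective (fun a : Fin (2 * (q' + 1)) => if h : (a : ℕ) < (2 * (q' + 1) - 1) then K ⟨a, h⟩ else I 0) then DForm.pow R (q' + 1) (fun x => x) (fun x => x) else 0) :=
      Finset.sum_congr rfl fun K _ => T _
    rw [hsum2]
    -- split the first sum according to the value at the last position
    have hphi : Function.Bijective (fun p : Fin (2 * (q' + 1)) × (Fin (2 * (q' + 1) - 1) → Fin (2 * (q' + 1))) =>
        (fun a : Fin (2 * (q' + 1)) => if h : (a : ℕ) < (2 * (q' + 1) - 1) then p.2 ⟨a, h⟩ else p.1)) := by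
      constructor
      · intro p p' hpp
        have h1 : p.1 = p'.1 := by
          have h0 := congrFun hpp ⟨(2 * (q' + 1) - 1), by omega⟩
          simpa using h0
        have h2 : p.2 = p'.2 := by
          funext t
          have h0 := congrFun hpp ⟨(t : ℕ), by have := t.isLt; omega⟩
          simpa using h0
        exact Prod.ext h1 h2
      · intro F
        refine ⟨(F ⟨(2 * (q' + 1) - 1), by omega⟩, fun t => F ⟨(t : ℕ), by have := t.isLt; omega⟩), ?_⟩
        funext a
        beta_reduce
        by_cases h : (a : ℕ) < (2 * (q' + 1) - 1)
        · rw [dif_pos h]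
        · rw [dif_neg h]
          exact congrArg F (Fin.ext (show (2 * (q' + 1) - 1) = (a : ℕ) from by have := a.isLt; omega))
    have hsplit : (∑ F : Fin (2 * (q' + 1)) → Fin (2 * (q' + 1)),
        (if Function.Injective F then DForm.pow R (q' + 1) (fun x => x) (fun x => x) else 0))
        = ∑ p : Fin (2 * (q' + 1)) × (Fin (2 * (q' + 1) - 1) → Fin (2 * (q' + 1))),
            (if Function.Injective (fun a : Fin (2 * (q' + 1)) => if h : (a : ℕ) < (2 * (q' + 1) - 1) then p.2 ⟨a, h⟩ else p.1) then DForm.pow R (q' + 1) (fun x => x) (fun x => x) else 0) :=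
      (Fintype.sum_bijective _ hphi
        (fun p => if Function.Injective (fun a : Fin (2 * (q' + 1)) => if h : (a : ℕ) < (2 * (q' + 1) - 1) then p.2 ⟨a, h⟩ else p.1) then DForm.pow R (q' + 1) (fun x => x) (fun x => x) else 0)
        (fun F => if Function.Injective F then DForm.pow R (q' + 1) (fun x => x) (fun x => x) else 0)
        (fun p => rfl)).symm
    rw [hsplit, Fintype.sum_prod_type]
    -- each slice contributes the same amount
    have hconst : ∀ i0 : Fin (2 * (q' + 1)),
        (∑ K : Fin (2 * (q' + 1) - 1) → Fin (2 * (q' + 1)),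
          (if Function.Injective (fun a : Fin (2 * (q' + 1)) => if h : (a : ℕ) < (2 * (q' + 1) - 1) then K ⟨a, h⟩ else i0) then DForm.pow R (q' + 1) (fun x => x) (fun x => x) else 0))
        = ∑ K : Fin (2 * (q' + 1) - 1) → Fin (2 * (q' + 1)),
            (if Function.Injective (fun a : Fin (2 * (q' + 1)) => if h : (a : ℕ) < (2 * (q' + 1) - 1) then K ⟨a, h⟩ else I 0) then DForm.pow R (q' + 1) (fun x => x) (fun x => x) else 0) := by
      intro i0
      have hbij : Function.Bijective
          (fun K : Fin (2 * (q' + 1) - 1) → Fin (2 * (q' + 1)) => ⇑(Equiv.swap (I 0) i0) ∘ K) := by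
        constructor
        · intro K K' hKK
          funext a
          exact (Equiv.swap (I 0) i0).injective (congrFun hKK a)
        · intro F
          exact ⟨⇑(Equiv.swap (I 0) i0).symm ∘ F, by
            funext a; simp [Function.comp]⟩
      apply Fintype.sum_bijective _ hbij
      intro K
      have he : (fun a : Fin (2 * (q' + 1)) => if h : (a : ℕ) < (2 * (q' + 1) - 1) then (⇑(Equiv.swap (I 0) i0) ∘ K) ⟨a, h⟩ else I 0)
          = ⇑(Equiv.swap (I 0) i0) ∘ (fun a : Fin (2 * (q' + 1)) => if h : (a : ℕ) < (2 * (q' + 1) - 1) then K ⟨a, h⟩ else i0) := by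
        funext a
        by_cases h : (a : ℕ) < (2 * (q' + 1) - 1)
        · simp [h, Function.comp]
        · simp [h, Function.comp, Equiv.swap_apply_right]
      rw [he]
      exact if_congr (Equiv.comp_injective _ _).symm rfl rfl
    rw [Finset.sum_congr rfl (fun i0 _ => hconst i0), Finset.sum_const,
      Finset.card_univ, Fintype.card_fin, nsmul_eq_mul]
    -- finish by arithmetic
    have hfac : ((2 * (q' + 1)).factorial : ℝ) = (2 * (q' + 1) : ℕ) * (((2 * (q' + 1) - 1)).factorial : ℝ) := by
      have h : (2 * (q' + 1) - 1) + 1 = 2 * (q' + 1) := by omega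
      rw [← h, Nat.factorial_succ]
      push_cast
      ring
    rw [hfac]
    have h1 : ((2 * (q' + 1) : ℕ) : ℝ) ≠ 0 := by positivity
    have h2 : ((((2 * (q' + 1) - 1)).factorial : ℕ) : ℝ) ≠ 0 :=
      Nat.cast_ne_zero.mpr (Nat.factorial_ne_zero _)
    field_simp
    ring
  · -- the case `I 0 ≠ J 0`: both terms vanish
    have hgd : DForm.gd I J = (0 : ℝ) := by simp [DForm.gd, hIJ]
    have hzero : ∀ K : Fin (2 * (q' + 1) - 1) → Fin (2 * (q' + 1)),
        DForm.pow R (q' + 1) (fun a : Fin (2 * (q' + 1)) => if h : (a : ℕ) < (2 * (q' + 1) - 1) then K ⟨a, h⟩ else I 0) (fun a : Fin (2 * (q' + 1)) => if h : (a : ℕ) < (2 * (q' + 1) - 1) then K ⟨a, h⟩ else J 0) = 0 := by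
      intro K
      by_cases hA : Function.Injective (fun a : Fin (2 * (q' + 1)) => if h : (a : ℕ) < (2 * (q' + 1) - 1) then K ⟨a, h⟩ else I 0)
      · apply P3b
        intro hB
        have hbij : Function.Bijective (fun a : Fin (2 * (q' + 1)) => if h : (a : ℕ) < (2 * (q' + 1) - 1) then K ⟨a, h⟩ else I 0) :=
          Finite.injective_iff_bijective.mp hA
        obtain ⟨j₀, hj₀⟩ := hbij.2 (J 0)
        by_cases hlt : (j₀ : ℕ) < (2 * (q' + 1) - 1)
        · have hKj : K ⟨(j₀ : ℕ), hlt⟩ = J 0 := by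
            rw [← hj₀]; simp [hlt]
          have hcol : (⟨(j₀ : ℕ), by have := j₀.isLt; omega⟩ : Fin (2 * (q' + 1)))
              = (⟨(2 * (q' + 1) - 1), by omega⟩ : Fin (2 * (q' + 1))) := by
            apply hB
            simp only [dif_pos (show ((⟨(j₀ : ℕ), by have := j₀.isLt; omega⟩ :
              Fin (2 * (q' + 1))) : ℕ) < (2 * (q' + 1) - 1) from hlt),
              dif_neg (show ¬(((⟨(2 * (q' + 1) - 1), by omega⟩ : Fin (2 * (q' + 1))) : ℕ) < (2 * (q' + 1) - 1)) from by simp)]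
            exact hKj
          have := congrArg Fin.val hcol
          simp at this
          omega
        · have : I 0 = J 0 := by rw [← hj₀]; simp [hlt]
          exact absurd this hIJ
      · exact P3a _ _ hA
    rw [hgd, Finset.sum_eq_zero (fun K _ => hzero K)]
    ring
end

section
/- Critical points in a conformal class: on a compact Riemannian manifold of dimension n > 2k, the derivative of the total Gauss-Bonnet functional H_{2k} in a conformal direction f·g is H_{2k}'(fg) = (n-2k)∫_M f·h_{2k} dμ_g; consequently g is critical for H_{2k} restricted to volume-preserving pointwise conformal variations if and only if h_{2k} is constant. -/
open scoped BigOperators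
open scoped Classical

open MeasureTheory

/-! Contractions are sums over repeated indices, so `c^a ∘ c^m = c^{a+m}` is a reindexing of a
finite sum; in particular the trace of `c^{2k-1}R^k` is `c^{2k}R^k = (2k)! h_{2k}`, while the
trace of `g` is `n`. Pairing with `f g` therefore gives `f (n h_{2k} - 2k h_{2k})`. For the
criticality statement, testing against `f = h_{2k} - ⨍ h_{2k}` gives
`∫ (h_{2k} - ⨍ h_{2k})² = 0`. -/

namespace Fin

theorem cons_append_comp_cast {α : Type*} {p m : ℕ} (a : α) (as : Fin m → α) (bs : Fin p → α) :
    Fin.cons a (Fin.append as bs ∘ Fin.cast (Nat.add_comm p m)) =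
      Fin.append (Fin.cons a as) bs ∘ Fin.cast (Nat.add_comm p (m + 1)) := by
  rw [Fin.append_cons]
  funext j
  refine Fin.cases ?_ (fun j => ?_) j
  · simp
  · simp only [Function.comp_apply, Fin.cons_succ]
    exact (Fin.cons_succ (α := fun _ => α) a (Fin.append as bs)
      (Fin.cast (Nat.add_comm p m) j)).symm

end Fin

namespace DForm

variable {n : ℕ}

theorem cIter_apply : ∀ (m : ℕ) {p q : ℕ} (ω : DForm n (p + m) (q + m))
    (I : Fin p → Fin n) (J : Fin q → Fin n),
    cIter m ω I J = ∑ A : Fin m → Fin n,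
      ω (Fin.append A I ∘ Fin.cast (Nat.add_comm p m))
        (Fin.append A J ∘ Fin.cast (Nat.add_comm q m))
  | 0, p, q, ω, I, J => by simp [cIter, Fin.append_left_nil _ _ rfl, Function.comp_def]
  | m + 1, p, q, ω, I, J => by
    rw [cIter, cIter_apply m, ← (Fin.consEquiv fun _ => Fin n).sum_comp,
      Fintype.sum_prod_type, Finset.sum_comm]
    refine Finset.sum_congr rfl fun A _ => Finset.sum_congr rfl fun i _ => ?_
    rw [Fin.cons_append_comp_cast, Fin.cons_append_comp_cast]
    rfl

theorem fullc_eq_sum_diag {p : ℕ} (ω : DForm n p p) : fullc ω = ∑ B : Fin p → Fin n, ω B B := by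
  simp [fullc, cIter_apply, cast']

theorem fullc_cIter_cast' {a m p : ℕ} (h : p = a + m) (ω : DForm n p p) :
    fullc (cIter (p := a) (q := a) m (cast' h h ω)) = fullc ω := by
  subst h
  let e : (Fin m → Fin n) × (Fin a → Fin n) ≃ (Fin (a + m) → Fin n) :=
    (Fin.appendEquiv m a).trans ((finCongr (Nat.add_comm m a)).arrowCongr (Equiv.refl _))
  simp only [fullc_eq_sum_diag, cIter_apply]
  rw [Finset.sum_comm, ← Fintype.sum_prod_type']
  exact Fintype.sum_equiv e _ _ fun _ => rfl

theorem innerPQ_mul_gd (ω : DForm n 1 1) (c : ℝ) :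
    innerPQ ω (fun I J => c * gd I J) = c * fullc ω := by
  have hdiag : ∀ I J : Fin 1 → Fin n, I 0 = J 0 ↔ I = J := fun I J =>
    (funext_iff.trans Fin.forall_fin_one).symm
  simp [innerPQ, gd, hdiag, fullc_eq_sum_diag, Finset.mul_sum, mul_comm]

theorem fullc_mul_gd_sub (ω : DForm n 1 1) (a b : ℝ) :
    fullc (fun I J => a * gd I J - b * ω I J) = a * n - b * fullc ω := by
  refine (fullc_eq_sum_diag _).trans ?_
  simp [fullc_eq_sum_diag, gd, Finset.sum_sub_distrib, Finset.mul_sum, mul_comm]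

end DForm

theorem forall_integral_mul_eq_zero_iff_ae_eq_const {X : Type*} [MeasurableSpace X]
    {μ : Measure X} [IsFiniteMeasure μ] {g : X → ℝ} (hg : Integrable g μ)
    (hg2 : Integrable (fun x => g x * g x) μ) :
    (∀ f : X → ℝ, Integrable f μ → Integrable (fun x => f x * g x) μ →
        ∫ x, f x ∂μ = 0 → ∫ x, f x * g x ∂μ = 0) ↔
      ∃ c : ℝ, ∀ᵐ x ∂μ, g x = c := by
  constructor
  · intro H
    set c := ⨍ x, g x ∂μ
    have hf : Integrable (fun x => g x - c) μ := hg.sub (integrable_const c)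
    have hfg : Integrable (fun x => (g x - c) * g x) μ :=
      (hg2.sub (hg.const_mul c)).congr (ae_of_all _ fun x => by simp only [Pi.sub_apply]; ring)
    have hmean : ∫ x, g x - c ∂μ = 0 := integral_sub_average μ g
    have hvar : ∫ x, (g x - c) * (g x - c) ∂μ = 0 := calc
      ∫ x, (g x - c) * (g x - c) ∂μ = ∫ x, (g x - c) * g x ∂μ - (∫ x, g x - c ∂μ) * c := by
        rw [← integral_mul_const, ← integral_sub hfg (hf.mul_const c)]
        simp only [mul_sub]
      _ = 0 := by rw [H _ hf hfg hmean, hmean, zero_mul, sub_zero]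
    have hvar_int : Integrable (fun x => (g x - c) * (g x - c)) μ :=
      (hfg.sub (hf.mul_const c)).congr (ae_of_all _ fun x => by simp only [Pi.sub_apply]; ring)
    refine ⟨c, ?_⟩
    filter_upwards [(integral_eq_zero_iff_of_nonneg (fun x => mul_self_nonneg (g x - c))
      hvar_int).mp hvar] with x hx
    exact sub_eq_zero.mp (mul_self_eq_zero.mp hx)
  · rintro ⟨c, hc⟩ f - - hf0
    rw [integral_congr_ae (hc.mono fun x hx => by rw [hx]), integral_mul_const, hf0, zero_mul]

/-- critical points in a conformal class: on a compact manifold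
`(M,μ_g)` of dimension `n > 2k`, the derivative of the total Gauss-Bonnet
functional `H_{2k}` in a conformal direction `f·g` is
`H_{2k}'(fg) = (n-2k)∫_M f·h_{2k} dμ_g`; pointwise the integrand is
`⟨h_{2k}g - (1/(2k-1)!)c^{2k-1}R^k, f·g⟩ = (n-2k)·f·h_{2k}` (first conjunct).
Consequently `g` is critical for `H_{2k}` under volume-preserving pointwise
conformal variations (i.e. `H_{2k}'(fg) = 0` for all `f` with `∫ f dμ = 0`) if
and only if `h_{2k}` is constant (second conjunct, a.e. with respect to the
volume measure). -/
theorem conformal_critical_iff_constant_gauss_bonnet_curvature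
    {n k : ℕ} (hk : 1 ≤ k)
    {X : Type} [MeasurableSpace X] (μ : Measure X) [IsFiniteMeasure μ]
    (Rf : X → DForm n 2 2)
    (h2k : X → ℝ)
    (hdef : ∀ x, h2k x = (((2 * k).factorial : ℝ))⁻¹ *
      DForm.fullc (DForm.pow (Rf x) k))
    (hint : Integrable h2k μ)
    (hint2 : Integrable (fun x => h2k x * h2k x) μ) :
    (∀ (f : X → ℝ) (x : X),
        DForm.innerPQ
          (fun I J => h2k x * DForm.gd I J -
            (((2 * k - 1).factorial : ℝ))⁻¹ *
              DForm.cIter (p := 1) (q := 1) (2 * k - 1)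
                (DForm.cast' (by omega) (by omega) (DForm.pow (Rf x) k)) I J)
          (fun I J => f x * DForm.gd I J) =
        ((n : ℝ) - 2 * k) * (f x * h2k x)) ∧
    ((∀ f : X → ℝ, Integrable f μ →
        Integrable (fun x => f x * h2k x) μ →
        ∫ x, f x ∂μ = 0 → ∫ x, f x * h2k x ∂μ = 0) ↔
      ∃ c : ℝ, ∀ᵐ x ∂μ, h2k x = c) := by
  refine ⟨fun f x => ?_, forall_integral_mul_eq_zero_iff_ae_eq_const hint hint2⟩
  have hfullc : DForm.fullc (DForm.pow (Rf x) k) = (2 * k).factorial * h2k x := by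
    rw [hdef x, mul_inv_cancel_left₀ (by positivity)]
  refine (DForm.innerPQ_mul_gd _ _).trans ?_
  refine (congrArg _ (DForm.fullc_mul_gd_sub _ _ _)).trans ?_
  rw [DForm.fullc_cIter_cast', hfullc,
    ← Nat.mul_factorial_pred (by omega : 2 * k ≠ 0)]
  push_cast
  field_simp
end
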